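/- arXiv:1608.02504 — 2 statements merged into one kernel-verified Lean document; each statement's English description precedes it below -/
import Mathlib

section
/- Let 𝔤 be a finite-dimensional Lie algebra over a field k of characteristic zero and r ∈ 𝔤 ∧ 𝔤 an r-matrix (skew-symmetric solution of CYB(r) = 0). Then the set 𝔥_r = {(f ⊗ 1)(r) | f ∈ 𝔤*} is a Lie subalgebra of 𝔤, r lies in 𝔥_r ∧ 𝔥_r, and r is non-degenerate as an element of 𝔥_r ∧ 𝔥_r (i.e. the induced map 𝔥_r* → 𝔥_r, f ↦ (f⊗1)r, is bijective). -/
/-!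
Contracting `C r r = 0` against `f ⊗ g ⊗ 1` expresses `⁅(f ⊗ 1) r, (g ⊗ 1) r⁆` as a slice
`(h ⊗ 1) r`, so `𝔥_r` is closed under the bracket. Skew-symmetry gives
`f ((g ⊗ 1) r) = -g ((f ⊗ 1) r)`. Hence the slices of `r` on both sides lie in `𝔥_r`, so `r` is
fixed by `P ⊗ P` for a projection `P` onto `𝔥_r` and lies in `𝔥_r ⊗ 𝔥_r`; and if
`(f ⊗ 1) r = 0` then `f` vanishes on `𝔥_r`.
-/
open scoped TensorProduct

/-- The Etingof–Schiffmann set `𝔥_r = {(f ⊗ 1)(r) | f ∈ 𝔤*}` associated to an element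
`r ∈ 𝔤 ⊗ 𝔤`. -/
noncomputable def esRange (k : Type*) [Field k] {L : Type*} [AddCommGroup L] [Module k L]
    (r : L ⊗[k] L) : Set L :=
  Set.range fun f : Module.Dual k L =>
    (TensorProduct.lid k L) ((TensorProduct.map f LinearMap.id) r)

namespace TensorProduct

section contractFst

variable {R M N : Type*} [CommRing R] [AddCommGroup M] [Module R M] [AddCommGroup N] [Module R N]

/-- The slice map `f ↦ (f ⊗ 1)`. -/
noncomputable def contractFst : Module.Dual R M →ₗ[R] M ⊗[R] N →ₗ[R] N :=
  LinearMap.llcomp R (M ⊗[R] N) (R ⊗[R] N) N (TensorProduct.lid R N) ∘ₗ LinearMap.rTensorHom N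

theorem contractFst_apply (f : Module.Dual R M) (t : M ⊗[R] N) :
    contractFst f t = TensorProduct.lid R N (TensorProduct.map f LinearMap.id t) :=
  rfl

@[simp]
theorem contractFst_tmul (f : Module.Dual R M) (m : M) (n : N) :
    contractFst f (m ⊗ₜ[R] n) = f m • n :=
  rfl

theorem contractFst_lTensor (f : Module.Dual R M) (e : N →ₗ[R] N) (t : M ⊗[R] N) :
    contractFst f (LinearMap.lTensor M e t) = e (contractFst f t) := by
  induction t using TensorProduct.induction_on with
  | zero => simp
  | tmul m n => simp
  | add x y hx hy => simp [hx, hy]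

theorem apply_contractFst_comm (f g : Module.Dual R M) (t : M ⊗[R] M) :
    f (contractFst g (TensorProduct.comm R M M t)) = g (contractFst f t) := by
  induction t using TensorProduct.induction_on with
  | zero => simp
  | tmul m n => simp [mul_comm]
  | add x y hx hy => simp [hx, hy]

theorem ext_contractFst [Module.Free R M] {x y : M ⊗[R] N}
    (h : ∀ f : Module.Dual R M, contractFst f x = contractFst f y) : x = y := by
  let b := Module.Free.chooseBasis R M
  refine (equivFinsuppOfBasisLeft b).injective (Finsupp.ext fun i => ?_)
  rw [equivFinsuppOfBasisLeft_apply, equivFinsuppOfBasisLeft_apply]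
  exact h (b.coord i)

end contractFst

section support

variable {k M N : Type*} [Field k] [AddCommGroup M] [Module k M] [AddCommGroup N] [Module k N]

theorem lTensor_eq_self_of_contractFst_mem {V : Submodule k N} {e : N →ₗ[k] N}
    (he : ∀ v ∈ V, e v = v) {t : M ⊗[k] N} (ht : ∀ f : Module.Dual k M, contractFst f t ∈ V) :
    LinearMap.lTensor M e t = t :=
  ext_contractFst fun f => by rw [contractFst_lTensor, he _ (ht f)]

theorem mem_span_tmul_of_contractFst_mem {U : Submodule k M} {V : Submodule k N} {t : M ⊗[k] N}
    (hU : ∀ f : Module.Dual k N, contractFst f (TensorProduct.comm k M N t) ∈ U)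
    (hV : ∀ f : Module.Dual k M, contractFst f t ∈ V) :
    t ∈ Submodule.span k {s | ∃ u ∈ U, ∃ v ∈ V, s = u ⊗ₜ[k] v} := by
  obtain ⟨pU, hpU⟩ := U.subtype.exists_leftInverse_of_injective U.ker_subtype
  obtain ⟨pV, hpV⟩ := V.subtype.exists_leftInverse_of_injective V.ker_subtype
  have hfixU : ∀ u ∈ U, (U.subtype ∘ₗ pU) u = u := fun u hu =>
    congrArg U.subtype (LinearMap.congr_fun hpU ⟨u, hu⟩)
  have hfixV : ∀ v ∈ V, (V.subtype ∘ₗ pV) v = v := fun v hv =>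
    congrArg V.subtype (LinearMap.congr_fun hpV ⟨v, hv⟩)
  have hright : LinearMap.lTensor M (V.subtype ∘ₗ pV) t = t :=
    lTensor_eq_self_of_contractFst_mem hfixV hV
  have hleft : LinearMap.rTensor N (U.subtype ∘ₗ pU) t = t := by
    apply (TensorProduct.comm k M N).injective
    rw [← LinearMap.lTensor_comm]
    exact lTensor_eq_self_of_contractFst_mem hfixU hU
  have ht : t = map U.subtype V.subtype (map pU pV t) := by
    rw [← LinearMap.comp_apply, ← map_comp, ← LinearMap.rTensor_comp_lTensor,
      LinearMap.comp_apply, hright, hleft]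
  rw [ht]
  refine Submodule.span_mono ?_
    (range_map_eq_span_tmul U.subtype V.subtype ▸ LinearMap.mem_range_self _ _)
  rintro _ ⟨u, v, rfl⟩
  exact ⟨u, u.2, v, v.2, rfl⟩

end support

end TensorProduct

open TensorProduct

section LieAlgebra

variable {k L : Type*} [CommRing k] [LieRing L] [LieAlgebra k L]

def IsClassicalYangBaxterMap (C : L ⊗[k] L →ₗ[k] L ⊗[k] L →ₗ[k] L ⊗[k] (L ⊗[k] L)) : Prop :=
  ∀ a b a' b' : L,
    C (a ⊗ₜ[k] b) (a' ⊗ₜ[k] b') =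
      ⁅a, a'⁆ ⊗ₜ[k] (b ⊗ₜ[k] b') + a ⊗ₜ[k] (⁅b, a'⁆ ⊗ₜ[k] b') + a ⊗ₜ[k] (a' ⊗ₜ[k] ⁅b, b'⁆)

noncomputable def esSubmodule (r : L ⊗[k] L) : Submodule k L :=
  LinearMap.range (contractFst.flip r)

theorem apply_contractFst_eq_neg {r : L ⊗[k] L} (hskew : TensorProduct.comm k L L r = -r)
    (f g : Module.Dual k L) : f (contractFst g r) = -g (contractFst f r) := by
  rw [← apply_contractFst_comm, hskew, map_neg, map_neg]

/-- The first two terms of `C (a ⊗ b) y` contract to the slice of `y` by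
`g b • (f ∘ ad a) + f a • (g ∘ ad b)`; the third contracts to the bracket. -/
theorem exists_contractFst_contractFst_eq_add_lie
    {C : L ⊗[k] L →ₗ[k] L ⊗[k] L →ₗ[k] L ⊗[k] (L ⊗[k] L)} (hC : IsClassicalYangBaxterMap C)
    (f g : Module.Dual k L) (x : L ⊗[k] L) :
    ∃ h : Module.Dual k L, ∀ y : L ⊗[k] L,
      contractFst g (contractFst f (C x y)) =
        contractFst h y + ⁅contractFst f x, contractFst g y⁆ := by
  induction x using TensorProduct.induction_on with
  | zero => exact ⟨0, fun y => by simp⟩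
  | tmul a b =>
    refine ⟨g b • (f ∘ₗ LieAlgebra.ad k L a) + f a • (g ∘ₗ LieAlgebra.ad k L b), fun y => ?_⟩
    induction y using TensorProduct.induction_on with
    | zero => simp
    | tmul a' b' =>
      simp only [hC a b a' b', map_add, contractFst_tmul, map_smul, LinearMap.add_apply,
        LinearMap.smul_apply, LinearMap.comp_apply, LieAlgebra.ad_apply, smul_lie, lie_smul]
      module
    | add y y' hy hy' => simp only [map_add, LinearMap.add_apply, lie_add, hy, hy']; abel
  | add x x' hx hx' =>
    obtain ⟨h, hh⟩ := hx
    obtain ⟨h', hh'⟩ := hx'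
    refine ⟨h + h', fun y => ?_⟩
    simp only [map_add, LinearMap.add_apply, add_lie, hh, hh']
    abel

theorem lie_mem_esSubmodule {r : L ⊗[k] L}
    {C : L ⊗[k] L →ₗ[k] L ⊗[k] L →ₗ[k] L ⊗[k] (L ⊗[k] L)} (hC : IsClassicalYangBaxterMap C)
    (hCYB : C r r = 0) {x y : L} (hx : x ∈ esSubmodule r) (hy : y ∈ esSubmodule r) :
    ⁅x, y⁆ ∈ esSubmodule r := by
  obtain ⟨f, rfl⟩ := hx
  obtain ⟨g, rfl⟩ := hy
  obtain ⟨h, hh⟩ := exists_contractFst_contractFst_eq_add_lie hC f g r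
  refine ⟨-h, ?_⟩
  have hrr := hh r
  rw [hCYB, map_zero, map_zero] at hrr
  simp only [LinearMap.flip_apply, map_neg]
  exact (eq_neg_of_add_eq_zero_right hrr.symm).symm

end LieAlgebra

theorem etingof_schiffmann_subalgebra_general
    {k : Type*} [Field k]
    {L : Type*} [LieRing L] [LieAlgebra k L]
    (r : L ⊗[k] L)
    (hskew : (TensorProduct.comm k L L) r = - r)
    (C : L ⊗[k] L →ₗ[k] L ⊗[k] L →ₗ[k] L ⊗[k] (L ⊗[k] L))
    (hC : ∀ a b a' b' : L,
      C (a ⊗ₜ[k] b) (a' ⊗ₜ[k] b') =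
        ⁅a, a'⁆ ⊗ₜ[k] (b ⊗ₜ[k] b') + a ⊗ₜ[k] (⁅b, a'⁆ ⊗ₜ[k] b') +
          a ⊗ₜ[k] (a' ⊗ₜ[k] ⁅b, b'⁆))
    (hCYB : C r r = 0) :
    (∃ 𝔥 : LieSubalgebra k L, (𝔥 : Set L) = esRange k r) ∧
    (r ∈ Submodule.span k
      {t : L ⊗[k] L | ∃ a ∈ esRange k r, ∃ b ∈ esRange k r, t = a ⊗ₜ[k] b}) ∧
    (∀ f : Module.Dual k L,
      (TensorProduct.lid k L) ((TensorProduct.map f LinearMap.id) r) = 0 →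
        ∀ y ∈ esRange k r, f y = 0) ∧
    (∀ y ∈ esRange k r, ∃ f : Module.Dual k L,
      (TensorProduct.lid k L) ((TensorProduct.map f LinearMap.id) r) = y) := by
  refine ⟨⟨{ esSubmodule r with lie_mem' := lie_mem_esSubmodule hC hCYB }, rfl⟩, ?_, ?_,
    fun y hy => hy⟩
  · refine mem_span_tmul_of_contractFst_mem (U := esSubmodule r) (V := esSubmodule r)
      (fun f => ⟨-f, ?_⟩) (fun f => ⟨f, rfl⟩)
    simp [hskew]
  · rintro f hf _ ⟨g, rfl⟩
    change f (contractFst g r) = 0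
    rw [apply_contractFst_eq_neg hskew, contractFst_apply, hf, map_zero, neg_zero]

/-- For an `r`-matrix `r` on a finite-dimensional Lie algebra `𝔤`, the set
`𝔥_r = {(f⊗1)r | f ∈ 𝔤*}` is a Lie subalgebra of `𝔤`, the element `r` lies in
`𝔥_r ∧ 𝔥_r`, and `r` is non-degenerate there: the induced map `𝔥_r* → 𝔥_r`,
`f ↦ (f⊗1)r`, is injective (and surjective by definition of `𝔥_r`). -/
theorem etingof_schiffmann_subalgebra
    {k : Type*} [Field k] [CharZero k]
    {L : Type*} [LieRing L] [LieAlgebra k L] [FiniteDimensional k L]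
    (r : L ⊗[k] L)
    (hskew : (TensorProduct.comm k L L) r = - r)
    (C : L ⊗[k] L →ₗ[k] L ⊗[k] L →ₗ[k] L ⊗[k] (L ⊗[k] L))
    (hC : ∀ a b a' b' : L,
      C (a ⊗ₜ[k] b) (a' ⊗ₜ[k] b') =
        ⁅a, a'⁆ ⊗ₜ[k] (b ⊗ₜ[k] b') + a ⊗ₜ[k] (⁅b, a'⁆ ⊗ₜ[k] b') +
          a ⊗ₜ[k] (a' ⊗ₜ[k] ⁅b, b'⁆))
    (hCYB : C r r = 0) :
    (∃ 𝔥 : LieSubalgebra k L, (𝔥 : Set L) = esRange k r) ∧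
    (r ∈ Submodule.span k
      {t : L ⊗[k] L | ∃ a ∈ esRange k r, ∃ b ∈ esRange k r, t = a ⊗ₜ[k] b}) ∧
    (∀ f : Module.Dual k L,
      (TensorProduct.lid k L) ((TensorProduct.map f LinearMap.id) r) = 0 →
        ∀ y ∈ esRange k r, f y = 0) ∧
    (∀ y ∈ esRange k r, ∃ f : Module.Dual k L,
      (TensorProduct.lid k L) ((TensorProduct.map f LinearMap.id) r) = y) :=
  etingof_schiffmann_subalgebra_general r hskew C hC hCYB
end

section
/- Let 𝔤 be a complex semisimple Lie algebra. Then there exists no non-degenerate r-matrix on 𝔤: every skew-symmetric solution r ∈ 𝔤 ∧ 𝔤 of the classical Yang–Baxter equation determines a degenerate 2-form. Equivalently, the skew-symmetric bilinear form ω(x,y) = f([x,y]) associated to any linear functional f ∈ 𝔤* is degenerate. -/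
/-!
By Cartan's criterion the Killing form `κ` of a semisimple Lie algebra is non-degenerate, so
every functional is `f = κ(p, ·)`. Invariance of `κ` gives
`f([x, p]) = -κ(p, [p, x]) = κ([p, p], x) = 0`, so `p` lies in the radical of
`ω(x, y) = f([x, y])` (and if `p = 0`, then `f = 0` and `ω = 0`).
-/

namespace LinearMap.BilinForm

variable {R L : Type*} [CommRing R] [LieRing L] [Module R L]

lemma apply_lie_eq_zero_of_lieInvariant {Φ : LinearMap.BilinForm R L} (hΦ : Φ.lieInvariant L)
    (x y : L) : Φ y ⁅x, y⁆ = 0 := by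
  have h : Φ ⁅y, y⁆ x = -Φ y ⁅y, x⁆ := hΦ y y x
  rw [lie_self, map_zero, LinearMap.zero_apply, eq_comm, neg_eq_zero] at h
  rw [← lie_skew, map_neg, h, neg_zero]

end LinearMap.BilinForm

namespace LieAlgebra

variable {K L : Type*} [Field K] [LieRing L] [LieAlgebra K L] [FiniteDimensional K L]
  [Nontrivial L]

theorem exists_ne_zero_forall_apply_lie_eq_zero_of_lieInvariant
    {Φ : LinearMap.BilinForm K L} (hΦ : Φ.Nondegenerate) (hΦ_inv : Φ.lieInvariant L)
    (f : Module.Dual K L) : ∃ z : L, z ≠ 0 ∧ ∀ x : L, f ⁅x, z⁆ = 0 := by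
  set p := (Φ.toDual hΦ).symm f
  have hf : ∀ y, f y = Φ p y := fun y => by
    rw [← LinearMap.BilinForm.toDual_def hΦ, LinearEquiv.apply_symm_apply]
  by_cases hp : p = 0
  · obtain ⟨z, hz⟩ := exists_ne (0 : L)
    exact ⟨z, hz, fun x => by rw [hf, hp, map_zero, LinearMap.zero_apply]⟩
  · exact ⟨p, hp, fun x => by
      rw [hf, LinearMap.BilinForm.apply_lie_eq_zero_of_lieInvariant hΦ_inv]⟩

end LieAlgebra

/-- On a (nontrivial, finite-dimensional) complex semisimple Lie algebra there is no
non-degenerate triangular structure: the skew-symmetric bilinear form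
`ω(x,y) = f([x,y])` associated to any linear functional `f ∈ 𝔤*` (which by
Whitehead's lemma exhausts all 2-cocycles, i.e. all candidate inverses of
non-degenerate r-matrices) is degenerate. -/
theorem no_nondegenerate_r_matrix_on_semisimple
    {L : Type*} [LieRing L] [LieAlgebra ℂ L] [FiniteDimensional ℂ L]
    [LieAlgebra.IsSemisimple ℂ L] [Nontrivial L]
    (f : Module.Dual ℂ L) :
    ∃ z : L, z ≠ 0 ∧ ∀ x : L, f ⁅x, z⁆ = 0 :=
  LieAlgebra.exists_ne_zero_forall_apply_lie_eq_zero_of_lieInvariant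
    (LieAlgebra.IsKilling.killingForm_nondegenerate ℂ L)
    (LieModule.traceForm_lieInvariant ℂ L L) f
end
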